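/- arXiv:2404.14733 — 2 statements merged into one kernel-verified Lean document; each statement's English description precedes it below -/
import Mathlib

section
/- Let q ∈ (0, 1/5) and x = q/(1−q), so that x ∈ (0, 1/4) and (1−2x)² > x. Then, with R(n) = 1 − h(x^n/(1+x^n)) − h(1/2 + (x^n + (1−2x)^n)/(2(1+x^n))), there exists N such that R(n) > 0 for all n ≥ N. -/
/-!
With `H` the entropy in nats, `1 - R(n) = (H(a) + H(1/2 + ε)) / log 2` where `a = xⁿ/(1+xⁿ)`,
`ε = (xⁿ + yⁿ)/(2(1+xⁿ))` and `y = 1 - 2x`. Near `1/2` the entropy drops quadratically,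
`H(1/2 + ε) ≤ log 2 - ε²`, while `H(a) ≤ a (1 - log a) = O(n xⁿ)`. Since `ε ≥ yⁿ/4` and
`x < y²`, the loss `H(a)` is eventually smaller than the gain `ε² ≥ (y²)ⁿ/16`.
-/

noncomputable def binEnt (p : ℝ) : ℝ :=
  -p * Real.logb 2 p - (1 - p) * Real.logb 2 (1 - p)

open Real Filter Topology

lemma binEnt_eq_binEntropy_div_log_two (p : ℝ) : binEnt p = binEntropy p / log 2 := by
  simp only [binEnt, binEntropy, logb, log_inv]
  ring

lemma Real.binEntropy_le_mul_one_sub_log {p : ℝ} (hp : p < 1) :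
    binEntropy p ≤ p * (1 - log p) := by
  have hq : 0 < 1 - p := by linarith
  have h := log_le_sub_one_of_pos (inv_pos.2 hq)
  have : (1 - p) * log (1 - p)⁻¹ ≤ p := by
    calc (1 - p) * log (1 - p)⁻¹ ≤ (1 - p) * ((1 - p)⁻¹ - 1) := by gcongr
      _ = p := by field_simp; ring
  rw [binEntropy, log_inv]
  linarith

lemma Real.log_two_sub_binEntropy_two_inv_add {ε : ℝ} (h₁ : -(2⁻¹) < ε) (h₂ : ε < 2⁻¹) :
    log 2 - binEntropy (2⁻¹ + ε) =
      2⁻¹ * log (1 - 4 * ε ^ 2) + ε * log ((1 + 2 * ε) / (1 - 2 * ε)) := by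
  have hp : 0 < 1 + 2 * ε := by linarith
  have hm : 0 < 1 - 2 * ε := by linarith
  have e₁ : (2⁻¹ + ε)⁻¹ = 2 / (1 + 2 * ε) := by field_simp
  have e₂ : (1 - (2⁻¹ + ε))⁻¹ = 2 / (1 - 2 * ε) := by
    rw [show 1 - (2⁻¹ + ε) = (1 - 2 * ε) / 2 by ring, inv_div]
  rw [binEntropy, e₁, e₂, log_div two_ne_zero hp.ne', log_div two_ne_zero hm.ne',
    log_div hp.ne' hm.ne', show 1 - 4 * ε ^ 2 = (1 + 2 * ε) * (1 - 2 * ε) by ring,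
    log_mul hp.ne' hm.ne']
  ring

lemma Real.binEntropy_two_inv_add_le {ε : ℝ} (h₀ : 0 ≤ ε) (h₁ : ε ≤ 8⁻¹) :
    binEntropy (2⁻¹ + ε) ≤ log 2 - ε ^ 2 := by
  have hp : 0 < 1 + 2 * ε := by linarith
  have hm : 0 < 1 - 2 * ε := by linarith
  have hsq : 0 < 1 - 4 * ε ^ 2 := by nlinarith
  -- `log t ≥ 1 - 1/t` is applied to the two logarithms of `log_two_sub_binEntropy_two_inv_add`:
  -- applied to `log (1 ± 2ε)` separately it would lose the `ε²` term.
  have hA := one_sub_inv_le_log_of_pos hsq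
  have hB := one_sub_inv_le_log_of_pos (div_pos hp hm)
  have hA' : -(64 / 15) * ε ^ 2 ≤ 1 - (1 - 4 * ε ^ 2)⁻¹ := by
    rw [← sub_nonneg]
    have : 1 - (1 - 4 * ε ^ 2)⁻¹ - -(64 / 15) * ε ^ 2 =
        4 * ε ^ 2 * (1 - 64 * ε ^ 2) / (15 * (1 - 4 * ε ^ 2)) := by
      field_simp; ring
    have h64 : 64 * ε ^ 2 ≤ 1 := by nlinarith
    rw [this]
    exact div_nonneg (mul_nonneg (by positivity) (by linarith)) (by positivity)
  have hB' : 16 / 5 * ε ≤ 1 - ((1 + 2 * ε) / (1 - 2 * ε))⁻¹ := by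
    rw [inv_div, ← sub_nonneg]
    have : 1 - (1 - 2 * ε) / (1 + 2 * ε) - 16 / 5 * ε =
        4 * ε * (1 - 8 * ε) / (5 * (1 + 2 * ε)) := by
      field_simp; ring
    rw [this]
    exact div_nonneg (mul_nonneg (by positivity) (by linarith)) (by positivity)
  have := log_two_sub_binEntropy_two_inv_add (ε := ε) (by linarith) (by linarith)
  nlinarith [mul_le_mul_of_nonneg_left (hB'.trans hB) h₀]

lemma eventually_affine_mul_pow_lt {r s : ℝ} (hr : 0 ≤ r) (hrs : r < s) (A B : ℝ) {c : ℝ}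
    (hc : 0 < c) : ∀ᶠ n : ℕ in atTop, (A + B * n) * r ^ n < c * s ^ n := by
  have hs : 0 < s := hr.trans_lt hrs
  have hρ₀ : 0 ≤ r / s := div_nonneg hr hs.le
  have hρ₁ : r / s < 1 := (div_lt_one hs).2 hrs
  have hlim : Tendsto (fun n : ℕ => A * (r / s) ^ n + B * (n * (r / s) ^ n)) atTop (𝓝 0) := by
    simpa using ((tendsto_pow_atTop_nhds_zero_of_lt_one hρ₀ hρ₁).const_mul A).add
      ((tendsto_self_mul_const_pow_of_lt_one hρ₀ hρ₁).const_mul B)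
  filter_upwards [hlim.eventually_lt_const hc] with n hn
  have hsn : 0 < s ^ n := pow_pos hs n
  calc (A + B * n) * r ^ n = (A * (r / s) ^ n + B * (n * (r / s) ^ n)) * s ^ n := by
        rw [div_pow]; field_simp
    _ < c * s ^ n := by gcongr

lemma Real.binEntropy_pow_div_one_add_pow_le {x : ℝ} (hx₀ : 0 < x) (hx₁ : x ≤ 1) (n : ℕ) :
    binEntropy (x ^ n / (1 + x ^ n)) ≤ (1 + log 2 + -log x * n) * x ^ n := by
  set s := x ^ n
  have hs₀ : 0 < s := pow_pos hx₀ n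
  have hs₁ : s ≤ 1 := pow_le_one₀ hx₀.le hx₁
  set p := s / (1 + s)
  have hp₀ : 0 < p := by positivity
  have hp₁ : p < 1 := (div_lt_one (by linarith)).2 (by linarith)
  have hps : p ≤ s := div_le_self hs₀.le (by linarith)
  have hlog : 1 - log p ≤ 1 + log 2 + -log x * n := by
    have : log (1 + s) ≤ log 2 := log_le_log (by linarith) (by linarith)
    rw [log_div hs₀.ne' (by linarith), log_pow]
    linarith
  have hlog₀ : 0 ≤ 1 - log p := by linarith [log_neg hp₀ hp₁]
  calc binEntropy p ≤ p * (1 - log p) := binEntropy_le_mul_one_sub_log hp₁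
    _ ≤ s * (1 + log 2 + -log x * n) := mul_le_mul hps hlog hlog₀ hs₀.le
    _ = _ := mul_comm _ _

lemma eventually_binEntropy_lt_sq {x y : ℝ} (hx : 0 < x) (hy₀ : 0 ≤ y) (hy₁ : y < 1)
    (hxy : x < y ^ 2) :
    ∀ᶠ n : ℕ in atTop, (x ^ n + y ^ n) / (2 * (1 + x ^ n)) ≤ 8⁻¹ ∧
      binEntropy (x ^ n / (1 + x ^ n)) < ((x ^ n + y ^ n) / (2 * (1 + x ^ n))) ^ 2 := by
  have hx₁ : x < 1 := hxy.trans (pow_lt_one₀ hy₀ hy₁ two_ne_zero)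
  have hxn := tendsto_pow_atTop_nhds_zero_of_lt_one hx.le hx₁
  have hε : Tendsto (fun n : ℕ => (x ^ n + y ^ n) / (2 * (1 + x ^ n))) atTop (𝓝 0) := by
    simpa [Pi.div_def] using (hxn.add (tendsto_pow_atTop_nhds_zero_of_lt_one hy₀ hy₁)).div
      (tendsto_const_nhds.mul (tendsto_const_nhds.add hxn)) (by norm_num)
  filter_upwards [hε.eventually_le_const (show (0 : ℝ) < 8⁻¹ by norm_num),
    eventually_affine_mul_pow_lt hx.le hxy (1 + log 2) (-log x) (c := 16⁻¹) (by norm_num)]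
    with n hsmall hdom
  refine ⟨hsmall, ?_⟩
  have hxn₀ : 0 < x ^ n := pow_pos hx n
  have hxn₁ : x ^ n ≤ 1 := pow_le_one₀ hx.le hx₁.le
  have hlow : y ^ n / 4 ≤ (x ^ n + y ^ n) / (2 * (1 + x ^ n)) := by
    rw [div_le_div_iff₀ (by norm_num) (by positivity)]
    nlinarith [pow_nonneg hy₀ n]
  calc binEntropy (x ^ n / (1 + x ^ n)) ≤ (1 + log 2 + -log x * n) * x ^ n :=
        binEntropy_pow_div_one_add_pow_le hx hx₁.le n
    _ < 16⁻¹ * (y ^ 2) ^ n := hdom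
    _ = (y ^ n / 4) ^ 2 := by rw [← pow_mul, mul_comm, pow_mul]; ring
    _ ≤ _ := pow_le_pow_left₀ (by positivity) hlow 2

lemma one_sub_binEnt_sub_binEnt_two_inv_add_pos {p ε : ℝ} (hε₀ : 0 ≤ ε) (hε₁ : ε ≤ 8⁻¹)
    (hp : binEntropy p < ε ^ 2) : 0 < 1 - binEnt p - binEnt (2⁻¹ + ε) := by
  have hsum : binEntropy p + binEntropy (2⁻¹ + ε) < log 2 := by
    linarith [binEntropy_two_inv_add_le hε₀ hε₁]
  rw [binEnt_eq_binEntropy_div_log_two, binEnt_eq_binEntropy_div_log_two, sub_sub,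
    ← add_div, sub_pos, div_lt_one (log_pos one_lt_two)]
  exact hsum

theorem bb84_threshold (q x : ℝ) (hq0 : 0 < q) (hq : q < 1 / 5)
    (hx : x = q / (1 - q)) :
    (0 < x ∧ x < 1 / 4) ∧ (1 - 2 * x) ^ 2 > x ∧
    ∃ N : ℕ, ∀ n ≥ N,
      0 < 1 - binEnt (x ^ n / (1 + x ^ n)) -
        binEnt (1 / 2 + (x ^ n + (1 - 2 * x) ^ n) / (2 * (1 + x ^ n))) := by
  have hx₀ : 0 < x := by rw [hx]; exact div_pos hq0 (by linarith)
  have hx₁ : x < 1 / 4 := by rw [hx, div_lt_iff₀ (by linarith)]; linarith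
  have hgap : (1 - 2 * x) ^ 2 > x := by nlinarith
  refine ⟨⟨hx₀, hx₁⟩, hgap, ?_⟩
  have hy₀ : 0 ≤ 1 - 2 * x := by linarith
  obtain ⟨N, hN⟩ := eventually_atTop.1 <|
    eventually_binEntropy_lt_sq hx₀ hy₀ (by linarith) hgap
  refine ⟨N, fun n hn => ?_⟩
  obtain ⟨hsmall, hdom⟩ := hN n hn
  have hε₀ : 0 ≤ (x ^ n + (1 - 2 * x) ^ n) / (2 * (1 + x ^ n)) :=
    div_nonneg (add_nonneg (pow_nonneg hx₀.le n) (pow_nonneg hy₀ n)) (by positivity)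
  rw [one_div]
  exact one_sub_binEnt_sub_binEnt_two_inv_add_pos hε₀ hsmall hdom
end

section
/- Let q ∈ (0, (3−√5)/(5−√5)) and x = q/(1−q), so that (1−x)² > x. Then, with R(n) = 1 − h(x^n/(1+x^n)) − h(1/2 + (1−x)^n/(2(1+x^n))), there exists N such that R(n) > 0 for all n ≥ N. -/
open Real Filter Topology

lemma negMulLog_le_two_mul_sqrt_sub {y : ℝ} (hy : 0 ≤ y) : negMulLog y ≤ 2 * (√y - y) := by
  have h := negMulLog_le_one_sub_self (sqrt_nonneg y)
  calc negMulLog y = negMulLog (√y * √y) := by rw [mul_self_sqrt hy]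
    _ = 2 * √y * negMulLog √y := by rw [negMulLog_mul]; ring
    _ ≤ 2 * √y * (1 - √y) := by gcongr
    _ = 2 * (√y - y) := by rw [mul_sub, mul_one, mul_assoc, mul_self_sqrt hy]; ring

lemma sqrt_one_add_add_sqrt_one_sub_le {t : ℝ} (ht : |t| ≤ 1) :
    √(1 + t) + √(1 - t) ≤ 2 - t ^ 2 / 4 := by
  obtain ⟨ht₁, ht₂⟩ := abs_le.mp ht
  set u := √(1 + t)
  set v := √(1 - t)
  have hu : u ^ 2 = 1 + t := sq_sqrt (by linarith)
  have hv : v ^ 2 = 1 - t := sq_sqrt (by linarith)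
  have hu0 : 0 ≤ u := sqrt_nonneg _
  have hv0 : 0 ≤ v := sqrt_nonneg _
  nlinarith [sq_nonneg (u - v), mul_nonneg hu0 hv0, sq_nonneg (u + v - 2)]

lemma binEntropy_eq_log_two_add_negMulLog (p : ℝ) :
    binEntropy p = log 2 + (negMulLog (2 * p) + negMulLog (2 * (1 - p))) / 2 := by
  rw [negMulLog_mul, negMulLog_mul, binEntropy_eq_negMulLog_add_negMulLog_one_sub]
  simp only [negMulLog]
  ring

lemma binEntropy_le_log_two_sub_sq {p : ℝ} (hp₀ : 0 ≤ p) (hp₁ : p ≤ 1) :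
    binEntropy p ≤ log 2 - (2 * p - 1) ^ 2 / 4 := by
  have h₁ := negMulLog_le_two_mul_sqrt_sub (y := 2 * p) (by linarith)
  have h₂ := negMulLog_le_two_mul_sqrt_sub (y := 2 * (1 - p)) (by linarith)
  have h₃ := sqrt_one_add_add_sqrt_one_sub_le (t := 2 * p - 1) (abs_le.mpr ⟨by linarith, by linarith⟩)
  rw [show 1 + (2 * p - 1) = 2 * p by ring, show 1 - (2 * p - 1) = 2 * (1 - p) by ring] at h₃
  rw [binEntropy_eq_log_two_add_negMulLog]
  linarith

lemma binEntropy_le_self_add_negMulLog {p : ℝ} (hp : p ≤ 1) : binEntropy p ≤ p + negMulLog p := by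
  have := negMulLog_le_one_sub_self (x := 1 - p) (by linarith)
  rw [binEntropy_eq_negMulLog_add_negMulLog_one_sub]
  linarith

lemma div_one_add_add_negMulLog_le {a : ℝ} (ha₀ : 0 < a) (ha₁ : a ≤ 1) :
    a / (1 + a) + negMulLog (a / (1 + a)) ≤ a * (2 - log a) := by
  have hε : a / (1 + a) ≤ a := div_le_self ha₀.le (by linarith)
  have hlog : log (1 + a) ≤ 1 := by linarith [log_le_sub_one_of_pos (x := 1 + a) (by linarith)]
  have hloga : log a ≤ 0 := log_nonpos ha₀.le ha₁
  calc a / (1 + a) + negMulLog (a / (1 + a))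
      = a / (1 + a) * (1 + log (1 + a) - log a) := by
        rw [negMulLog, log_div ha₀.ne' (by linarith)]; ring
    _ ≤ a * (2 - log a) := by
        apply mul_le_mul hε (by linarith) (by linarith [log_nonneg (x := 1 + a) (by linarith)])
          ha₀.le

lemma binEntropy_add_binEntropy_lt_log_two {a b : ℝ} (ha₀ : 0 < a) (ha₁ : a ≤ 1) (hb₀ : 0 ≤ b)
    (hb₁ : b ≤ 1) (h : 16 * (a * (2 - log a)) < b ^ 2) :
    binEntropy (a / (1 + a)) + binEntropy (2⁻¹ + b / (2 * (1 + a))) < log 2 := by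
  have hδ₀ : 0 ≤ b / (2 * (1 + a)) := by positivity
  have hδ₁ : b / (2 * (1 + a)) ≤ 2⁻¹ := by
    rw [div_le_iff₀ (by positivity)]; linarith
  have hδ : b ^ 2 / 16 ≤ (b / (2 * (1 + a))) ^ 2 := by
    rw [div_pow, div_le_div_iff₀ (by norm_num) (by positivity)]
    gcongr
    nlinarith
  have h₁ := (binEntropy_le_self_add_negMulLog (by
    rw [div_le_one (by linarith)]; linarith)).trans (div_one_add_add_negMulLog_le ha₀ ha₁)
  have h₂ := binEntropy_le_log_two_sub_sq (p := 2⁻¹ + b / (2 * (1 + a))) (by positivity)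
    (by linarith)
  rw [show 2 * (2⁻¹ + b / (2 * (1 + a))) - 1 = 2 * (b / (2 * (1 + a))) by ring] at h₂
  linarith

lemma eventually_mul_two_sub_log_pow_lt {x : ℝ} (hx₀ : 0 < x) (hx : x < (1 - x) ^ 2) :
    ∀ᶠ n : ℕ in atTop, 16 * (x ^ n * (2 - log (x ^ n))) < ((1 - x) ^ n) ^ 2 := by
  set ρ := x / (1 - x) ^ 2
  have hpos : 0 < (1 - x) ^ 2 := hx₀.trans hx
  have hρ₀ : 0 ≤ ρ := by positivity
  have hρ₁ : ρ < 1 := (div_lt_one hpos).mpr hx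
  have hlim : Tendsto (fun n : ℕ ↦ 16 * (2 * ρ ^ n - log x * (n * ρ ^ n))) atTop (𝓝 0) := by
    simpa using ((tendsto_pow_atTop_nhds_zero_of_lt_one hρ₀ hρ₁).const_mul 2 |>.sub
      ((tendsto_self_mul_const_pow_of_lt_one hρ₀ hρ₁).const_mul (log x))).const_mul 16
  filter_upwards [hlim.eventually_lt_const one_pos] with n hn
  have hxn : x ^ n = ρ ^ n * ((1 - x) ^ n) ^ 2 := by
    rw [← pow_mul, mul_comm n 2, pow_mul, ← mul_pow, div_mul_cancel₀ _ hpos.ne']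
  calc 16 * (x ^ n * (2 - log (x ^ n)))
      = 16 * (2 * ρ ^ n - log x * (n * ρ ^ n)) * ((1 - x) ^ n) ^ 2 := by
        rw [log_pow, hxn]; ring
    _ < 1 * ((1 - x) ^ n) ^ 2 := by
        gcongr
        rw [← pow_mul, mul_comm n 2, pow_mul]
        exact pow_pos hpos n
    _ = ((1 - x) ^ n) ^ 2 := one_mul _

lemma lt_one_sub_sq_of_lt {x : ℝ} (hx : x < (3 - √5) / 2) : x < (1 - x) ^ 2 := by
  have h5 : √5 ^ 2 = 5 := sq_sqrt (by norm_num)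
  nlinarith [mul_pos (sub_pos.mpr hx) (show 0 < (3 + √5) / 2 - x by nlinarith [sqrt_nonneg 5])]

lemma sqrt_five_lt_three : √5 < 3 := (sqrt_lt' three_pos).mpr (by norm_num)

lemma three_sub_sqrt_five_div_lt_one : (3 - √5) / (5 - √5) < 1 :=
  (div_lt_one (by linarith [sqrt_five_lt_three])).mpr (by linarith)

lemma div_one_sub_lt_of_lt {q : ℝ} (hq : q < (3 - √5) / (5 - √5)) :
    q / (1 - q) < (3 - √5) / 2 := by
  have hq₁ : q < 1 := hq.trans three_sub_sqrt_five_div_lt_one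
  have h₂ := sqrt_five_lt_three
  rw [lt_div_iff₀ (by linarith)] at hq
  rw [div_lt_div_iff₀ (by linarith) two_pos]
  linarith

theorem six_state_threshold (q x : ℝ) (hq0 : 0 < q)
    (hq : q < (3 - Real.sqrt 5) / (5 - Real.sqrt 5))
    (hx : x = q / (1 - q)) :
    (1 - x) ^ 2 > x ∧
    ∃ N : ℕ, ∀ n ≥ N,
      0 < 1 - binEnt (x ^ n / (1 + x ^ n)) -
        binEnt (1 / 2 + (1 - x) ^ n / (2 * (1 + x ^ n))) := by
  have hx₁ : x < (3 - √5) / 2 := hx ▸ div_one_sub_lt_of_lt hq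
  have hx₀ : 0 < x := hx ▸ div_pos hq0 (by linarith [three_sub_sqrt_five_div_lt_one])
  have hxx : x < (1 - x) ^ 2 := lt_one_sub_sq_of_lt hx₁
  refine ⟨hxx, ?_⟩
  have hx1 : x < 1 := hx₁.trans (by linarith [lt_sqrt_of_sq_lt (by norm_num : (1 : ℝ) ^ 2 < 5)])
  obtain ⟨N, hN⟩ := eventually_atTop.mp (eventually_mul_two_sub_log_pow_lt hx₀ hxx)
  refine ⟨N, fun n hn ↦ ?_⟩
  have key := binEntropy_add_binEntropy_lt_log_two (pow_pos hx₀ n) (pow_le_one₀ hx₀.le hx1.le)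
    (pow_nonneg (by linarith) n) (pow_le_one₀ (by linarith) (by linarith)) (hN n hn)
  rw [binEnt_eq_binEntropy_div_log_two, binEnt_eq_binEntropy_div_log_two, one_div,
    sub_sub, ← add_div, sub_pos, div_lt_one (log_pos one_lt_two)]
  exact key
end
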